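/- arXiv:2406.01766 — 3 statements merged into one kernel-verified Lean document; each statement's English description precedes it below -/
import Mathlib

section
/- The Hermite coefficients of the ReLU function σ(x) = max(0,x) satisfy: σ̂₀ = 1/√(2π), σ̂₁ = 1/2, σ̂_k = 0 for odd k ≥ 3, and for even k ≥ 2, σ̂_k = (−1)^{k/2 − 1} · √(1/(2π)) · (k−2)! / (√(k!) · 2^{k/2−1} · (k/2−1)!). -/
open MeasureTheory ProbabilityTheory Real

/-- normalized probabilists' Hermite polynomial `h_k = H_k / √(k!)` -/
noncomputable def hermiteN (k : ℕ) (x : ℝ) : ℝ :=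
  (Polynomial.aeval x (Polynomial.hermite k)) / Real.sqrt (Nat.factorial k)

/-- `k`-th Hermite coefficient of ReLU: `σ̂_k = E_{x∼N(0,1)}[max(0,x) h_k(x)]`. -/
noncomputable def reluCoeff (k : ℕ) : ℝ :=
  ∫ x, max 0 x * hermiteN k x ∂(gaussianReal 0 1)

open Polynomial Filter Set

noncomputable def rHermite (m : ℕ) : ℝ[X] := (Polynomial.hermite m).map (algebraMap ℤ ℝ)

lemma rHermite_succ (m : ℕ) :
    rHermite (m+1) = X * rHermite m - derivative (rHermite m) := by
  simp [rHermite, hermite_succ, Polynomial.map_sub, Polynomial.map_mul, derivative_map]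

lemma aeval_eq_rHermite (m : ℕ) (x : ℝ) :
    (Polynomial.aeval x (Polynomial.hermite m)) = (rHermite m).eval x := by
  rw [rHermite, eval_map, aeval_def]

lemma exp_half_tendsto : Tendsto (fun x : ℝ => Real.exp (-(1/2) * x)) atTop (nhds 0) := by
  apply Real.tendsto_exp_atBot.comp
  exact Tendsto.const_mul_atTop_of_neg (by norm_num) tendsto_id

lemma tendsto_pow_gauss (n : ℕ) :
    Tendsto (fun x : ℝ => x ^ n * Real.exp (-(x^2/2))) atTop (nhds 0) := by
  have h := (rpow_mul_exp_neg_mul_sq_isLittleO_exp_neg (by norm_num : (0:ℝ) < 1/2)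
    (n : ℝ)).tendsto_zero_of_tendsto exp_half_tendsto
  have : (fun x : ℝ => x ^ (n:ℝ) * Real.exp (-(1/2) * x ^ 2))
      = fun x : ℝ => x ^ n * Real.exp (-(x^2/2)) := by
    funext x; rw [Real.rpow_natCast]; ring_nf
  rwa [this] at h

lemma tendsto_poly_gauss (p : ℝ[X]) :
    Tendsto (fun x : ℝ => p.eval x * Real.exp (-(x^2/2))) atTop (nhds 0) := by
  induction p using Polynomial.induction_on' with
  | add p q hp hq =>
    simp only [eval_add, add_mul]
    simpa using hp.add hq
  | monomial n a =>
    simp only [eval_monomial]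
    have := (tendsto_pow_gauss n).const_mul a
    simpa [mul_assoc] using this

lemma integrableOn_pow_gauss (n : ℕ) :
    IntegrableOn (fun x : ℝ => x ^ n * Real.exp (-(x^2/2))) (Ioi 0) := by
  have h := integrableOn_rpow_mul_exp_neg_mul_sq (by norm_num : (0:ℝ) < 1/2)
    (s := (n:ℝ)) (by linarith [Nat.cast_nonneg (α := ℝ) n] : (-1:ℝ) < (n:ℝ))
  have : (fun x : ℝ => x ^ (n:ℝ) * Real.exp (-(1/2) * x ^ 2))
      = fun x : ℝ => x ^ n * Real.exp (-(x^2/2)) := by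
    funext x; rw [Real.rpow_natCast]; ring_nf
  rwa [this] at h

lemma integrableOn_poly_gauss (p : ℝ[X]) :
    IntegrableOn (fun x : ℝ => p.eval x * Real.exp (-(x^2/2))) (Ioi 0) := by
  induction p using Polynomial.induction_on' with
  | add p q hp hq =>
    have := hp.add hq
    simpa [add_mul, Pi.add_def] using this
  | monomial n a =>
    have := (integrableOn_pow_gauss n).const_mul a
    simpa [eval_monomial, mul_assoc, IntegrableOn] using this

lemma hasDerivAt_gauss (x : ℝ) :
    HasDerivAt (fun x : ℝ => Real.exp (-(x^2/2))) (-x * Real.exp (-(x^2/2))) x := by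
  have h : HasDerivAt (fun x : ℝ => -(x^2/2)) (-x) x := by
    simpa using ((hasDerivAt_pow 2 x).div_const 2).fun_neg
  simpa [mul_comm] using h.exp

lemma key_hasDerivAt (m : ℕ) (x : ℝ) :
    HasDerivAt (fun y : ℝ => -((rHermite m).eval y * Real.exp (-(y^2/2))))
      ((rHermite (m+1)).eval x * Real.exp (-(x^2/2))) x := by
  have h := (((rHermite m).hasDerivAt x).fun_mul (hasDerivAt_gauss x)).fun_neg
  refine h.congr_deriv ?_
  rw [rHermite_succ]
  simp only [eval_sub, eval_mul, eval_X]
  ring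

noncomputable def J (m : ℕ) : ℝ := ∫ x in Ioi (0:ℝ), (rHermite m).eval x * Real.exp (-(x^2/2))

lemma J_succ (m : ℕ) : J (m+1) = (rHermite m).eval 0 := by
  have h := integral_Ioi_of_hasDerivAt_of_tendsto' (a := (0:ℝ)) (m := 0)
    (fun x _ => key_hasDerivAt m x) (integrableOn_poly_gauss (rHermite (m+1)))
    (by simpa using (tendsto_poly_gauss (rHermite m)).neg)
  rw [J, h]
  simp

lemma J_zero : J 0 = Real.sqrt (2 * π) / 2 := by
  have h : J 0 = ∫ x in Ioi (0:ℝ), Real.exp (-(1/2) * x^2) := by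
    rw [J]
    congr 1; funext x
    simp [rHermite]
    ring_nf
  rw [h, integral_gaussian_Ioi]
  norm_num
  ring

lemma derivative_hermite : ∀ n : ℕ,
    derivative (Polynomial.hermite n) = (n : ℤ[X]) * Polynomial.hermite (n-1)
  | 0 => by simp
  | 1 => by simp [hermite_one]
  | (n+2) => by
    have ihn := derivative_hermite (n+1)
    simp only [Nat.add_sub_cancel] at ihn
    have hd : derivative (Polynomial.hermite n)
        = X * Polynomial.hermite n - Polynomial.hermite (n+1) := by
      rw [hermite_succ n]; ring
    rw [hermite_succ (n+1), derivative_sub, derivative_mul, derivative_X, ihn,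
      derivative_mul, hd]
    simp only [Nat.add_sub_cancel, Polynomial.derivative_natCast]
    push_cast
    ring

lemma rHermite_deriv (n : ℕ) :
    derivative (rHermite n) = (n : ℝ[X]) * rHermite (n-1) := by
  rw [rHermite, derivative_map, derivative_hermite]
  simp [rHermite, Polynomial.map_mul]

/-- the three-term recurrence at function level -/
lemma x_mul_rHermite (k : ℕ) (x : ℝ) :
    x * (rHermite k).eval x
      = (rHermite (k+1)).eval x + k * (rHermite (k-1)).eval x := by
  have h := rHermite_succ k
  rw [rHermite_deriv] at h
  have := congrArg (Polynomial.eval x) h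
  simp only [eval_sub, eval_mul, eval_X, eval_natCast] at this
  rw [this]; ring

lemma gaussian_integral_eq (g : ℝ → ℝ) :
    ∫ x, g x ∂(gaussianReal 0 1)
      = ∫ x, ProbabilityTheory.gaussianPDFReal 0 1 x * g x := by
  rw [gaussianReal_of_var_ne_zero 0 one_ne_zero]
  have hmeas : Measurable (fun x => (ProbabilityTheory.gaussianPDFReal 0 1 x).toNNReal) :=
    (ProbabilityTheory.measurable_gaussianPDFReal 0 1).real_toNNReal
  have hpdf : (ProbabilityTheory.gaussianPDF 0 1)
      = fun x => ((ProbabilityTheory.gaussianPDFReal 0 1 x).toNNReal : ENNReal) := by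
    funext x
    rw [ProbabilityTheory.gaussianPDF, ENNReal.ofReal]
  rw [hpdf, integral_withDensity_eq_integral_smul hmeas]
  congr 1; funext x
  rw [NNReal.smul_def, Real.coe_toNNReal _ (ProbabilityTheory.gaussianPDFReal_nonneg 0 1 x)]
  simp [smul_eq_mul]

lemma reluCoeff_eq (k : ℕ) :
    reluCoeff k = (Real.sqrt (2 * π))⁻¹ * (Real.sqrt (Nat.factorial k))⁻¹
      * ∫ x in Ioi (0:ℝ), x * (rHermite k).eval x * Real.exp (-(x^2/2)) := by
  rw [reluCoeff, gaussian_integral_eq]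
  have h1 : (fun x : ℝ => ProbabilityTheory.gaussianPDFReal 0 1 x * (max 0 x * hermiteN k x))
      = Set.indicator (Ioi (0:ℝ)) (fun x =>
          (Real.sqrt (2*π))⁻¹ * (Real.sqrt (Nat.factorial k))⁻¹
            * (x * (rHermite k).eval x * Real.exp (-(x^2/2)))) := by
    funext x
    rw [ProbabilityTheory.gaussianPDFReal]
    by_cases hx : x ∈ Ioi (0:ℝ)
    · rw [Set.indicator_of_mem hx]
      rw [max_eq_right (le_of_lt hx)]
      rw [hermiteN, aeval_eq_rHermite]
      push_cast
      ring_nf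
    · rw [Set.indicator_of_notMem hx]
      rw [max_eq_left (by simpa using hx : x ≤ 0)]
      ring
  rw [h1, integral_indicator measurableSet_Ioi, integral_const_mul]

open scoped Nat

lemma G_eq (k : ℕ) :
    (∫ x in Ioi (0:ℝ), x * (rHermite k).eval x * Real.exp (-(x^2/2)))
      = J (k+1) + k * J (k-1) := by
  have h1 := integrableOn_poly_gauss (rHermite (k+1))
  have h2 := (integrableOn_poly_gauss (rHermite (k-1))).const_mul (k:ℝ)
  have hfun : (fun x : ℝ => x * (rHermite k).eval x * Real.exp (-(x^2/2)))
      = fun x : ℝ => (rHermite (k+1)).eval x * Real.exp (-(x^2/2))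
          + (k:ℝ) * ((rHermite (k-1)).eval x * Real.exp (-(x^2/2))) := by
    funext x
    rw [x_mul_rHermite k x]
    ring
  rw [hfun, integral_add h1 h2, integral_const_mul, J, J]

lemma rHermite_eval_zero_odd (n : ℕ) (hn : Odd n) : (rHermite n).eval 0 = 0 := by
  rw [← Polynomial.coeff_zero_eq_eval_zero, rHermite, Polynomial.coeff_map,
    Polynomial.coeff_hermite_of_odd_add (by simpa using hn)]
  simp

lemma rHermite_eval_zero_even (i : ℕ) :
    (rHermite (2*i)).eval 0 = (-1)^i * ((2*i-1)‼ : ℝ) := by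
  have h := Polynomial.coeff_hermite_explicit i 0
  rw [Nat.add_zero] at h
  rw [← Polynomial.coeff_zero_eq_eval_zero, rHermite, Polynomial.coeff_map, h]
  push_cast
  simp

lemma dfact_succ (i : ℕ) : (2*i+1)‼ = (2*i+1) * (2*i-1)‼ := by
  cases i with
  | zero => simp [Nat.doubleFactorial]
  | succ n =>
    have h1 : 2*(n+1)+1 = (2*n+1)+2 := by omega
    have h2 : 2*(n+1)-1 = 2*n+1 := by omega
    rw [h1, h2, Nat.doubleFactorial_add_two]

lemma fact_dfact : ∀ i : ℕ, 2^i * i ! * (2*i-1)‼ = (2*i)!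
  | 0 => by simp [Nat.doubleFactorial]
  | (i+1) => by
    have ih := fact_dfact i
    have h2 : 2*(i+1)-1 = 2*i+1 := by omega
    have h3 : 2*(i+1) = (2*i+1)+1 := by omega
    rw [h2, dfact_succ, h3, Nat.factorial_succ (2*i+1), Nat.factorial_succ (2*i), Nat.factorial_succ i, ← ih,
      pow_succ]
    ring

theorem stmt6 :
    reluCoeff 0 = 1 / Real.sqrt (2 * π) ∧
    reluCoeff 1 = 1 / 2 ∧
    (∀ k : ℕ, Odd k → 3 ≤ k → reluCoeff k = 0) ∧
    (∀ j : ℕ, 1 ≤ j →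
      reluCoeff (2 * j)
        = (-1 : ℝ) ^ (j - 1) * Real.sqrt (1 / (2 * π))
            * (Nat.factorial (2 * j - 2))
            / (Real.sqrt (Nat.factorial (2 * j)) * 2 ^ (j - 1) * Nat.factorial (j - 1))) := by
  have hc : (0:ℝ) < Real.sqrt (2*π) := Real.sqrt_pos.mpr (by positivity)
  refine ⟨?_, ?_, ?_, ?_⟩
  · rw [reluCoeff_eq 0, G_eq]
    have hJ1 : J 1 = 1 := by rw [J_succ]; simp [rHermite]
    rw [hJ1]
    norm_num [one_div]
  · have h2 : J 2 = 0 := by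
      rw [J_succ]; simp [rHermite, hermite_one]
    rw [reluCoeff_eq 1, G_eq, h2]
    norm_num [J_zero]
    field_simp
  · intro k hk h3
    obtain ⟨m, rfl⟩ : ∃ m, k = 2*m+3 := by
      obtain ⟨n, rfl⟩ := hk; exact ⟨n-1, by omega⟩
    rw [reluCoeff_eq, G_eq]
    have h1 : J ((2*m+3)+1) = 0 := by
      rw [J_succ, rHermite_eval_zero_odd _ ⟨m+1, by ring⟩]
    have h2 : J ((2*m+3)-1) = 0 := by
      have e : (2*m+3)-1 = (2*m+1)+1 := by omega
      rw [e, J_succ, rHermite_eval_zero_odd _ ⟨m, by ring⟩]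
    rw [h1, h2]; ring
  · intro j hj
    obtain ⟨i, rfl⟩ : ∃ i, j = i+1 := ⟨j-1, by omega⟩
    rw [reluCoeff_eq, G_eq]
    have h1 : J (2*(i+1)+1) = (-1)^(i+1) * ((2*(i+1)-1)‼ : ℝ) := by
      rw [J_succ, rHermite_eval_zero_even (i+1)]
    have h2 : J (2*(i+1)-1) = (-1)^i * ((2*i-1)‼ : ℝ) := by
      have e : 2*(i+1)-1 = 2*i+1 := by omega
      rw [e, J_succ, rHermite_eval_zero_even i]
    rw [h1, h2]
    rw [one_div, Real.sqrt_inv]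
    have e3 : 2*(i+1)-2 = 2*i := by omega
    have e4 : i+1-1 = i := by omega
    rw [e3, e4]
    have hdf : ((2*(i+1)-1)‼ : ℝ) = (2*i+1) * ((2*i-1)‼:ℝ) := by
      have e : 2*(i+1)-1 = 2*i+1 := by omega
      rw [e]; exact_mod_cast dfact_succ i
    have hdd : ((2*i)! : ℝ) = 2^i * (i)! * ((2*i-1)‼ : ℝ) := by
      exact_mod_cast congrArg (Nat.cast : ℕ → ℝ) (fact_dfact i).symm
    rw [hdf, hdd]
    have hs : Real.sqrt ((2*(i+1))! : ℝ) ≠ 0 :=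
      ne_of_gt (Real.sqrt_pos.mpr (by positivity))
    have hfi : ((i)! : ℝ) ≠ 0 := by positivity
    push_cast
    field_simp
    ring
end

section
/- Let K(w,u) = (1/Z²) Σ_{k≥ℓ} σ̂_k² cos^k θ with θ the angle between unit vectors w,u, where |σ̂_k|² = Θ(k^{−5/2}) and Z² = Σ_{k≥ℓ} σ̂_k² . Then there exists r = Θ(ℓ^{−1/2}) and a constant ρ₁ > 0 (independent of ℓ) such that K(w,u) ≤ 1 − ρ₁ whenever θ ≥ r. -/
open Real
open scoped BigOperators Classical

/-- the kernel induced by coefficients `c k = σ̂_k²` and truncation level `ℓ`,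
as a function of `t = cos θ`: `K = (Σ_{k≥ℓ} c_k t^k) / (Σ_{k≥ℓ} c_k)`. -/
noncomputable def Kc (c : ℕ → ℝ) (ℓ : ℕ) (t : ℝ) : ℝ :=
  (∑' k : ℕ, if ℓ ≤ k then c k * t ^ k else 0) /
    (∑' k : ℕ, if ℓ ≤ k then c k else 0)

/-- Non-degeneracy (i): if the squared Hermite coefficients satisfy
`c k = Θ(k^{-5/2})`, then there is `r = Θ(ℓ^{-1/2})` and a constant `ρ₁ > 0`
independent of `ℓ` such that `K(w,u) ≤ 1 - ρ₁` whenever the angle `θ ≥ r`. -/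
theorem stmt13 (c : ℕ → ℝ) (A B : ℝ) (hA : 0 < A) (hAB : A ≤ B)
    (hc0 : ∀ k, 0 ≤ c k)
    (hcΘ : ∀ k : ℕ, 1 ≤ k →
      A * (k : ℝ) ^ (-(5 : ℝ) / 2) ≤ c k ∧ c k ≤ B * (k : ℝ) ^ (-(5 : ℝ) / 2)) :
    ∃ C₁ C₂ ρ₁ : ℝ, 0 < C₁ ∧ 0 < C₂ ∧ 0 < ρ₁ ∧
      ∀ ℓ : ℕ, 1 ≤ ℓ → ∃ r : ℝ,
        C₁ * (ℓ : ℝ) ^ (-(1 : ℝ) / 2) ≤ r ∧ r ≤ C₂ * (ℓ : ℝ) ^ (-(1 : ℝ) / 2) ∧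
        ∀ θ : ℝ, r ≤ θ → θ ≤ π / 2 → Kc c ℓ (Real.cos θ) ≤ 1 - ρ₁ := by
  refine ⟨1, 1, 1 - Real.exp (-(1/5)), one_pos, one_pos, by
    have := Real.exp_lt_one_iff.mpr (by norm_num : -(1/5 : ℝ) < 0); linarith, ?_⟩
  intro ℓ hℓ
  set r : ℝ := (ℓ : ℝ) ^ (-(1 : ℝ) / 2) with hr
  have hℓpos : (0 : ℝ) < ℓ := by exact_mod_cast hℓ
  have hℓ1 : (1 : ℝ) ≤ ℓ := by exact_mod_cast hℓ
  have hrpos : 0 < r := Real.rpow_pos_of_pos hℓpos _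
  have hr1 : r ≤ 1 := Real.rpow_le_one_of_one_le_of_nonpos hℓ1 (by norm_num)
  have hrsq : r ^ 2 = (ℓ : ℝ)⁻¹ := by
    rw [hr, ← Real.rpow_natCast ((ℓ : ℝ) ^ (-(1:ℝ)/2)) 2, ← Real.rpow_mul hℓpos.le]
    norm_num [Real.rpow_neg_one]
  refine ⟨r, by rw [one_mul], by rw [one_mul], ?_⟩
  intro θ hθr hθπ
  -- t = cos θ ∈ [0, cos r]
  set t : ℝ := Real.cos θ with ht
  have hπ : 0 < π := Real.pi_pos
  have hθ0 : 0 ≤ θ := le_trans hrpos.le hθr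
  have ht0 : 0 ≤ t := Real.cos_nonneg_of_mem_Icc ⟨by linarith, hθπ⟩
  have htcos : t ≤ Real.cos r := by
    apply Real.cos_le_cos_of_nonneg_of_le_pi hrpos.le (by linarith) hθr
  have hπlt : π < 3.15 := Real.pi_lt_d2
  have hcosr : Real.cos r ≤ 1 - r ^ 2 / 5 := by
    have h1 : Real.cos r ≤ 1 - 2 / π ^ 2 * r ^ 2 := by
      apply Real.cos_le_one_sub_mul_cos_sq
      rw [abs_of_nonneg hrpos.le]; linarith
    have hπ2 : π ^ 2 ≤ 10 := by nlinarith
    have hr2 : 0 ≤ r ^ 2 := sq_nonneg r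
    have hkey : (1/5 : ℝ) ≤ 2 / π ^ 2 := by
      rw [div_le_div_iff₀ (by norm_num) (by positivity)]; nlinarith
    have : r ^ 2 / 5 ≤ 2 / π ^ 2 * r ^ 2 := by
      calc r ^ 2 / 5 = (1/5) * r ^ 2 := by ring
        _ ≤ 2 / π ^ 2 * r ^ 2 := mul_le_mul_of_nonneg_right hkey hr2
    linarith
  have ht1 : t ≤ 1 := Real.cos_le_one θ
  have hcosr1 : Real.cos r ≤ 1 := Real.cos_le_one r
  have hcosr0 : 0 ≤ Real.cos r := le_trans ht0 htcos
  -- summability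
  have hsum5 : Summable (fun k : ℕ => B * (k : ℝ) ^ (-(5:ℝ)/2)) := by
    apply Summable.mul_left
    exact Real.summable_nat_rpow.mpr (by norm_num)
  have hfle : ∀ k : ℕ, (if ℓ ≤ k then c k else 0) ≤ B * (k : ℝ) ^ (-(5:ℝ)/2) := by
    intro k
    by_cases h : ℓ ≤ k
    · simp only [h, if_true]
      exact (hcΘ k (le_trans hℓ h)).2
    · simp only [h, if_false]
      have hB : (0:ℝ) < B := lt_of_lt_of_le hA hAB
      exact mul_nonneg hB.le (Real.rpow_nonneg (Nat.cast_nonneg k) _)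
  have hf0 : ∀ k : ℕ, 0 ≤ (if ℓ ≤ k then c k else 0) := by
    intro k; by_cases h : ℓ ≤ k <;> simp [h, hc0 k]
  have hfS : Summable (fun k : ℕ => if ℓ ≤ k then c k else 0) :=
    Summable.of_nonneg_of_le hf0 hfle hsum5
  have hg0 : ∀ k : ℕ, 0 ≤ (if ℓ ≤ k then c k * t ^ k else 0) := by
    intro k; by_cases h : ℓ ≤ k <;> simp [h]
    · exact mul_nonneg (hc0 k) (pow_nonneg ht0 k)
  have hgle : ∀ k : ℕ, (if ℓ ≤ k then c k * t ^ k else 0) ≤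
      t ^ ℓ * (if ℓ ≤ k then c k else 0) := by
    intro k
    by_cases h : ℓ ≤ k
    · simp only [h, if_true]
      rw [mul_comm (t ^ ℓ)]
      exact mul_le_mul_of_nonneg_left (pow_le_pow_of_le_one ht0 ht1 h) (hc0 k)
    · simp [h]
  have hgS : Summable (fun k : ℕ => if ℓ ≤ k then c k * t ^ k else 0) :=
    Summable.of_nonneg_of_le hg0 hgle (hfS.mul_left _)
  -- denominator positive
  have hden : 0 < ∑' k : ℕ, (if ℓ ≤ k then c k else 0) := by
    have hcl : 0 < c ℓ := by
      have := (hcΘ ℓ hℓ).1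
      have hp : (0:ℝ) < A * (ℓ : ℝ) ^ (-(5:ℝ)/2) := by positivity
      linarith
    have : (if ℓ ≤ ℓ then c ℓ else 0) ≤ ∑' k : ℕ, (if ℓ ≤ k then c k else 0) :=
      Summable.le_tsum hfS ℓ (fun j _ => hf0 j)
    simp only [le_refl, if_true] at this
    linarith
  -- K ≤ t^ℓ
  have hK : Kc c ℓ t ≤ t ^ ℓ := by
    rw [Kc, div_le_iff₀ hden]
    calc (∑' k : ℕ, if ℓ ≤ k then c k * t ^ k else 0)
        ≤ ∑' k : ℕ, t ^ ℓ * (if ℓ ≤ k then c k else 0) :=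
          Summable.tsum_le_tsum hgle hgS (hfS.mul_left _)
      _ = t ^ ℓ * ∑' k : ℕ, (if ℓ ≤ k then c k else 0) := tsum_mul_left
  -- t^ℓ ≤ exp(-1/5)
  have h1 : t ^ ℓ ≤ (1 - r ^ 2 / 5) ^ ℓ := by
    apply pow_le_pow_left₀ ht0
    linarith
  have h15 : (0:ℝ) ≤ 1 - r ^ 2 / 5 := by nlinarith [sq_nonneg r, hrsq]
  have h2 : (1 - r ^ 2 / 5 : ℝ) ≤ Real.exp (-(r ^ 2 / 5)) := by
    have := Real.add_one_le_exp (-(r ^ 2 / 5))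
    linarith
  have h3 : (1 - r ^ 2 / 5) ^ ℓ ≤ Real.exp (-(r ^ 2 / 5)) ^ ℓ :=
    pow_le_pow_left₀ h15 h2 ℓ
  have h4 : Real.exp (-(r ^ 2 / 5)) ^ ℓ = Real.exp (-(1/5)) := by
    rw [← Real.exp_nat_mul, hrsq]
    congr 1
    field_simp
  calc Kc c ℓ t ≤ t ^ ℓ := hK
    _ ≤ (1 - r ^ 2 / 5) ^ ℓ := h1
    _ ≤ Real.exp (-(r ^ 2 / 5)) ^ ℓ := h3
    _ = Real.exp (-(1/5)) := h4
    _ = 1 - (1 - Real.exp (-(1/5))) := by ring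
end

section
/- Let μ ∈ M(S^{d−1}) be a signed measure, μ* = Σᵢ aᵢ* δ_{wᵢ*}, and let η: S^{d−1} → ℝ satisfy η(wᵢ*) = sign(aᵢ*) for all i and |η(w)| ≤ 1 − ρ·∠(w, wᵢ*)² for w in the Voronoi cell 𝒯ᵢ of wᵢ*. Then ⟨η, μ*⟩ = |μ*|₁, and for any μ, |⟨η, μ⟩| ≤ |μ|₁ − ρ Σᵢ ∫_{𝒯ᵢ} ∠(w, wᵢ*)² d|μ|(w). -/
open MeasureTheory ProbabilityTheory Real
open scoped BigOperators Classical

noncomputable section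

/-- dot product on `ℝ^d` -/
def dotp {d : ℕ} (v w : Fin d → ℝ) : ℝ := ∑ j, v j * w j

/-- angle (up to sign) between directions: `∠(v,w) = arccos |vᵀw|` for unit vectors -/
def ang {d : ℕ} (v w : Fin d → ℝ) : ℝ := Real.arccos |dotp v w|

/-- pairing `⟨η, μ⟩ = ∫ η dμ` of a function against a signed measure, via the
Jordan decomposition -/
def pairSM {d : ℕ} (η : (Fin d → ℝ) → ℝ) (μ : SignedMeasure (Fin d → ℝ)) : ℝ :=
  (∫ x, η x ∂μ.toJordanDecomposition.posPart) -
    ∫ x, η x ∂μ.toJordanDecomposition.negPart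

/-- total variation norm `|μ|₁` of a signed measure -/
def tv {d : ℕ} (μ : SignedMeasure (Fin d → ℝ)) : ℝ :=
  (μ.totalVariation Set.univ).toReal

/- auxiliary lemmas -/

lemma aux_integrable_dirac {α E : Type*} [MeasurableSpace α] [MeasurableSingletonClass α]
    [NormedAddCommGroup E] (f : α → E) (a : α) : Integrable f (Measure.dirac a) := by
  refine (integrable_const (f a)).congr ?_
  rw [Filter.EventuallyEq, MeasureTheory.ae_dirac_eq]
  simp

lemma aux_vm_sum_apply {α : Type*} [MeasurableSpace α] {ι : Type*} (s : Finset ι)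
    (v : ι → VectorMeasure α ℝ) (A : Set α) : (∑ i ∈ s, v i) A = ∑ i ∈ s, v i A := by
  classical
  induction s using Finset.induction_on with
  | empty => simp
  | insert _ _ h ih =>
    rw [Finset.sum_insert h, Finset.sum_insert h, VectorMeasure.add_apply, ih]

lemma aux_cont_ang {d : ℕ} (v : Fin d → ℝ) : Continuous (fun w : Fin d → ℝ => ang w v) :=
  Real.continuous_arccos.comp
    ((continuous_finset_sum _ fun j _ => (continuous_apply j).mul continuous_const).abs)

lemma aux_sign_mul (x : ℝ) (h : x ≠ 0) : x * Real.sign x = |x| := by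
  rcases lt_or_gt_of_ne h with h' | h'
  · rw [Real.sign_of_neg h', abs_of_neg h']; ring
  · rw [Real.sign_of_pos h', abs_of_pos h']; ring

lemma aux_max_sub (a : ℝ) : max a 0 - max (-a) 0 = a := by
  rcases le_or_gt a 0 with h | h
  · rw [max_eq_right h, max_eq_left (by linarith)]; ring
  · rw [max_eq_left h.le, max_eq_right (by linarith)]; ring

lemma aux_max_add (a : ℝ) : max a 0 + max (-a) 0 = |a| := by
  rcases le_or_gt a 0 with h | h
  · rw [max_eq_right h, max_eq_left (by linarith), abs_of_nonpos h]; ring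
  · rw [max_eq_left h.le, max_eq_right (by linarith), abs_of_pos h]; ring

/-- Properties of a non-degenerate dual certificate `η`: it pairs with the
ground-truth measure `μ* = Σᵢ aᵢ* δ_{wᵢ*}` to its full total variation, and for
any signed measure `μ` supported on the sphere,
`|⟨η,μ⟩| ≤ |μ|₁ − ρ Σᵢ ∫_{𝒯ᵢ} ∠(w,wᵢ*)² d|μ|(w)`. -/
theorem stmt14 (d m : ℕ) (wstar : Fin m → Fin d → ℝ)
    (hws : ∀ i, dotp (wstar i) (wstar i) = 1)
    (astar : Fin m → ℝ) (hastar : ∀ i, astar i ≠ 0)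
    -- the cells `𝒯ᵢ`: a measurable partition of the sphere into Voronoi regions
    -- of the teacher directions (ties broken arbitrarily)
    (T : Fin m → Set (Fin d → ℝ)) (hTmeas : ∀ i, MeasurableSet (T i))
    (hTdisj : Pairwise (Function.onFun Disjoint T))
    (hTcover : (⋃ i, T i) = {w : Fin d → ℝ | dotp w w = 1})
    (hTvor : ∀ i, T i ⊆ {w : Fin d → ℝ | ∀ j, ang w (wstar i) ≤ ang w (wstar j)})
    (ρ : ℝ) (hρ : 0 < ρ)
    (η : (Fin d → ℝ) → ℝ)
    (hη1 : ∀ i, η (wstar i) = Real.sign (astar i))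
    (hη2 : ∀ i, ∀ w ∈ T i, |η w| ≤ 1 - ρ * (ang w (wstar i)) ^ 2)
    (μstar : SignedMeasure (Fin d → ℝ))
    (hμstar : μstar = ∑ i, astar i • (Measure.dirac (wstar i)).toSignedMeasure) :
    pairSM η μstar = tv μstar ∧
    ∀ μ : SignedMeasure (Fin d → ℝ),
      μ.totalVariation {w : Fin d → ℝ | dotp w w = 1}ᶜ = 0 →
      |pairSM η μ| ≤ tv μ - ρ * ∑ i, ∫ x in T i, (ang x (wstar i)) ^ 2
        ∂μ.totalVariation := by
  classical
  -- the positive and negative parts of μ*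
  set P : Measure (Fin d → ℝ) :=
    ∑ i, ENNReal.ofReal (astar i) • Measure.dirac (wstar i) with hP
  set N : Measure (Fin d → ℝ) :=
    ∑ i, ENNReal.ofReal (-astar i) • Measure.dirac (wstar i) with hN
  have hPfin : IsFiniteMeasure P := by
    constructor
    rw [hP, Measure.finset_sum_apply]
    refine ENNReal.sum_lt_top.2 fun i _ => ?_
    rw [Measure.smul_apply, smul_eq_mul]
    exact ENNReal.mul_lt_top ENNReal.ofReal_lt_top (measure_lt_top _ _)
  have hNfin : IsFiniteMeasure N := by
    constructor
    rw [hN, Measure.finset_sum_apply]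
    refine ENNReal.sum_lt_top.2 fun i _ => ?_
    rw [Measure.smul_apply, smul_eq_mul]
    exact ENNReal.mul_lt_top ENNReal.ofReal_lt_top (measure_lt_top _ _)
  -- no point carries both a positive and a negative coefficient
  have hsign : ∀ i j, wstar i = wstar j → 0 < astar i → astar j < 0 → False := by
    intro i j hw hi hj
    have h1 := hη1 i
    have h2 := hη1 j
    rw [hw, h2, Real.sign_of_neg hj] at h1
    rw [Real.sign_of_pos hi] at h1
    norm_num at h1
  have hPN : P ⟂ₘ N := by
    set A : Set (Fin d → ℝ) := wstar '' {i | 0 < astar i} with hA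
    have hAfin : A.Finite := (Set.toFinite _).image _
    refine ⟨Aᶜ, hAfin.measurableSet.compl, ?_, ?_⟩
    · rw [hP, Measure.finset_sum_apply]
      refine Finset.sum_eq_zero fun i _ => ?_
      rcases le_or_gt (astar i) 0 with h | h
      · simp [Measure.smul_apply, ENNReal.ofReal_eq_zero.2 h]
      · have hmem : wstar i ∈ A := ⟨i, h, rfl⟩
        have h0 : Measure.dirac (wstar i) Aᶜ = 0 := by
          rw [Measure.dirac_apply, Set.indicator_of_notMem (by simpa using hmem)]
        simp [Measure.smul_apply, h0]
    · rw [compl_compl, hN, Measure.finset_sum_apply]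
      refine Finset.sum_eq_zero fun i _ => ?_
      rcases le_or_gt 0 (astar i) with h | h
      · simp [Measure.smul_apply, ENNReal.ofReal_eq_zero.2 (by linarith : -astar i ≤ 0)]
      · have : wstar i ∉ A := by
          rintro ⟨j, hj, hw⟩
          exact hsign j i hw hj h
        simp [Measure.smul_apply, Measure.dirac_apply, Set.indicator_of_notMem this]
  let jd : JordanDecomposition (Fin d → ℝ) :=
    { posPart := P, negPart := N, posPart_finite := hPfin, negPart_finite := hNfin,
      mutuallySingular := hPN }
  -- μ* equals the signed measure of this Jordan decomposition
  have hjd : μstar = jd.toSignedMeasure := by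
    apply VectorMeasure.ext
    intro s hs
    have hPs : (P s).toReal = ∑ i, max (astar i) 0 * (Measure.dirac (wstar i) s).toReal := by
      rw [hP, Measure.finset_sum_apply, ENNReal.toReal_sum
        (fun i _ => by
          rw [Measure.smul_apply, smul_eq_mul]
          exact ENNReal.mul_ne_top ENNReal.ofReal_ne_top (measure_ne_top _ _))]
      refine Finset.sum_congr rfl fun i _ => ?_
      rw [Measure.smul_apply, smul_eq_mul, ENNReal.toReal_mul, ENNReal.toReal_ofReal']
    have hNs : (N s).toReal = ∑ i, max (-astar i) 0 * (Measure.dirac (wstar i) s).toReal := by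
      rw [hN, Measure.finset_sum_apply, ENNReal.toReal_sum
        (fun i _ => by
          rw [Measure.smul_apply, smul_eq_mul]
          exact ENNReal.mul_ne_top ENNReal.ofReal_ne_top (measure_ne_top _ _))]
      refine Finset.sum_congr rfl fun i _ => ?_
      rw [Measure.smul_apply, smul_eq_mul, ENNReal.toReal_mul, ENNReal.toReal_ofReal']
    have hRHS : jd.toSignedMeasure s = (P s).toReal - (N s).toReal := by
      show (P.toSignedMeasure - N.toSignedMeasure) s = _
      rw [VectorMeasure.sub_apply, Measure.toSignedMeasure_apply_measurable hs,
        Measure.toSignedMeasure_apply_measurable hs]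
      rfl
    rw [hRHS, hPs, hNs, ← Finset.sum_sub_distrib, hμstar, aux_vm_sum_apply]
    refine Finset.sum_congr rfl fun i _ => ?_
    rw [VectorMeasure.smul_apply, Measure.toSignedMeasure_apply_measurable hs, smul_eq_mul,
      ← sub_mul, aux_max_sub]
    rfl
  have hJ : μstar.toJordanDecomposition = jd := SignedMeasure.toJordanDecomposition_eq hjd
  constructor
  · -- part 1
    have hintP : ∀ i ∈ Finset.univ,
        Integrable η (ENNReal.ofReal (astar i) • Measure.dirac (wstar i)) := fun i _ =>
      (aux_integrable_dirac η (wstar i)).smul_measure ENNReal.ofReal_ne_top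
    have hintN : ∀ i ∈ Finset.univ,
        Integrable η (ENNReal.ofReal (-astar i) • Measure.dirac (wstar i)) := fun i _ =>
      (aux_integrable_dirac η (wstar i)).smul_measure ENNReal.ofReal_ne_top
    have hPint : (∫ x, η x ∂P) = ∑ i, max (astar i) 0 * η (wstar i) := by
      rw [hP, integral_finset_sum_measure hintP]
      refine Finset.sum_congr rfl fun i _ => ?_
      rw [integral_smul_measure, integral_dirac, ENNReal.toReal_ofReal', smul_eq_mul]
    have hNint : (∫ x, η x ∂N) = ∑ i, max (-astar i) 0 * η (wstar i) := by
      rw [hN, integral_finset_sum_measure hintN]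
      refine Finset.sum_congr rfl fun i _ => ?_
      rw [integral_smul_measure, integral_dirac, ENNReal.toReal_ofReal', smul_eq_mul]
    have hpair : pairSM η μstar = ∑ i, |astar i| := by
      rw [pairSM, hJ]
      show (∫ x, η x ∂P) - (∫ x, η x ∂N) = _
      rw [hPint, hNint, ← Finset.sum_sub_distrib]
      refine Finset.sum_congr rfl fun i _ => ?_
      rw [← sub_mul, aux_max_sub, hη1 i, aux_sign_mul _ (hastar i)]
    have htv : tv μstar = ∑ i, |astar i| := by
      rw [tv, SignedMeasure.totalVariation, hJ]
      show ((P + N) Set.univ).toReal = _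
      rw [Measure.add_apply, ENNReal.toReal_add (measure_ne_top P _) (measure_ne_top N _)]
      have h1 : (P Set.univ).toReal = ∑ i, max (astar i) 0 := by
        rw [hP, Measure.finset_sum_apply, ENNReal.toReal_sum
          (fun i _ => by simp [Measure.smul_apply, ENNReal.mul_ne_top, ENNReal.ofReal_ne_top,
            measure_ne_top])]
        refine Finset.sum_congr rfl fun i _ => ?_
        simp [Measure.smul_apply, ENNReal.toReal_mul, ENNReal.toReal_ofReal']
      have h2 : (N Set.univ).toReal = ∑ i, max (-astar i) 0 := by
        rw [hN, Measure.finset_sum_apply, ENNReal.toReal_sum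
          (fun i _ => by simp [Measure.smul_apply, ENNReal.mul_ne_top, ENNReal.ofReal_ne_top,
            measure_ne_top])]
        refine Finset.sum_congr rfl fun i _ => ?_
        simp [Measure.smul_apply, ENNReal.toReal_mul, ENNReal.toReal_ofReal']
      rw [h1, h2, ← Finset.sum_add_distrib]
      exact Finset.sum_congr rfl fun i _ => aux_max_add _
    rw [hpair, htv]
  · -- part 2
    intro μ hsupp
    set ν : Measure (Fin d → ℝ) := μ.totalVariation with hν
    have hνeq : ν = μ.toJordanDecomposition.posPart + μ.toJordanDecomposition.negPart := rfl
    have hνfin : IsFiniteMeasure ν := by rw [hνeq]; infer_instance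
    -- the quadratic weight function
    set F : (Fin d → ℝ) → ℝ :=
      fun w => ∑ i, Set.indicator (T i) (fun w => (ang w (wstar i)) ^ 2) w with hF
    have hFmeas : Measurable F := by
      refine Finset.measurable_sum _ fun i _ => Measurable.indicator ?_ (hTmeas i)
      exact (((aux_cont_ang (wstar i)).pow 2).measurable)
    have hFbd : ∀ w, |F w| ≤ (m : ℝ) * Real.pi ^ 2 := by
      intro w
      have h1 : ∀ i, 0 ≤ Set.indicator (T i) (fun w => (ang w (wstar i)) ^ 2) w :=
        fun i => Set.indicator_nonneg (fun w _ => sq_nonneg _) w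
      have h2 : ∀ i, Set.indicator (T i) (fun w => (ang w (wstar i)) ^ 2) w ≤ Real.pi ^ 2 := by
        intro i
        refine Set.indicator_le' (fun w _ => ?_) (fun w _ => sq_nonneg _) w
        have hlo : 0 ≤ ang w (wstar i) := Real.arccos_nonneg _
        have hhi : ang w (wstar i) ≤ Real.pi := Real.arccos_le_pi _
        exact pow_le_pow_left₀ hlo hhi 2
      rw [abs_of_nonneg (Finset.sum_nonneg fun i _ => h1 i)]
      show (∑ i, Set.indicator (T i) (fun w => (ang w (wstar i)) ^ 2) w) ≤ (m : ℝ) * Real.pi ^ 2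
      calc (∑ i, Set.indicator (T i) (fun w => (ang w (wstar i)) ^ 2) w)
          ≤ ∑ _i : Fin m, Real.pi ^ 2 := Finset.sum_le_sum fun i _ => h2 i
        _ = (m : ℝ) * Real.pi ^ 2 := by simp [mul_comm]
    have hFint : Integrable F ν := by
      refine Integrable.mono' (integrable_const ((m : ℝ) * Real.pi ^ 2))
        hFmeas.aestronglyMeasurable ?_
      exact Filter.Eventually.of_forall fun w => hFbd w
    -- the pointwise bound holds a.e. with respect to ν
    have hae : ∀ᵐ w ∂ν, ‖η w‖ ≤ 1 - ρ * F w := by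
      rw [MeasureTheory.ae_iff]
      refine measure_mono_null ?_ hsupp
      intro w hw
      simp only [Set.mem_setOf_eq, not_le] at hw
      simp only [Set.mem_compl_iff, Set.mem_setOf_eq]
      intro hwS
      have hwU : w ∈ ⋃ i, T i := by rw [hTcover]; exact hwS
      obtain ⟨i, hwi⟩ := Set.mem_iUnion.1 hwU
      have hFw : F w = (ang w (wstar i)) ^ 2 := by
        show (∑ j, Set.indicator (T j) (fun w => (ang w (wstar j)) ^ 2) w) = _
        rw [Finset.sum_eq_single i]
        · rw [Set.indicator_of_mem hwi]
        · intro j _ hj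
          refine Set.indicator_of_notMem ?_ _
          intro hwj
          exact (hTdisj hj).ne_of_mem hwj hwi rfl
        · simp
      have hb := hη2 i w hwi
      rw [Real.norm_eq_abs, hFw] at hw
      linarith
    set g : (Fin d → ℝ) → ℝ := fun w => 1 - ρ * F w with hg
    have hgint : Integrable g ν := (integrable_const (1 : ℝ)).sub (hFint.const_mul ρ)
    have hlepos : μ.toJordanDecomposition.posPart ≤ ν := hνeq ▸ Measure.le_add_right le_rfl
    have hleneg : μ.toJordanDecomposition.negPart ≤ ν := hνeq ▸ Measure.le_add_left le_rfl
    have haepos : ∀ᵐ w ∂μ.toJordanDecomposition.posPart, ‖η w‖ ≤ g w :=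
      hae.filter_mono (ae_mono hlepos)
    have haeneg : ∀ᵐ w ∂μ.toJordanDecomposition.negPart, ‖η w‖ ≤ g w :=
      hae.filter_mono (ae_mono hleneg)
    have h1 : ‖∫ x, η x ∂μ.toJordanDecomposition.posPart‖ ≤
        ∫ x, g x ∂μ.toJordanDecomposition.posPart :=
      norm_integral_le_of_norm_le (hgint.mono_measure hlepos) haepos
    have h2 : ‖∫ x, η x ∂μ.toJordanDecomposition.negPart‖ ≤
        ∫ x, g x ∂μ.toJordanDecomposition.negPart :=
      norm_integral_le_of_norm_le (hgint.mono_measure hleneg) haeneg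
    have hsplit : (∫ x, g x ∂μ.toJordanDecomposition.posPart) +
        (∫ x, g x ∂μ.toJordanDecomposition.negPart) = ∫ x, g x ∂ν := by
      rw [hνeq, integral_add_measure (hgint.mono_measure hlepos) (hgint.mono_measure hleneg)]
    have hgval : (∫ x, g x ∂ν) = tv μ - ρ * ∑ i, ∫ x in T i, (ang x (wstar i)) ^ 2 ∂ν := by
      rw [hg]
      rw [integral_sub (integrable_const 1) (hFint.const_mul ρ), integral_const,
        integral_const_mul]
      have hFval : (∫ x, F x ∂ν) = ∑ i, ∫ x in T i, (ang x (wstar i)) ^ 2 ∂ν := by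
        rw [hF, integral_finset_sum _ (fun i _ => ?_)]
        · refine Finset.sum_congr rfl fun i _ => ?_
          rw [integral_indicator (hTmeas i)]
        · refine Integrable.indicator ?_ (hTmeas i)
          refine Integrable.mono' (integrable_const (Real.pi ^ 2))
            (((aux_cont_ang (wstar i)).pow 2).measurable.aestronglyMeasurable) ?_
          refine Filter.Eventually.of_forall fun w => ?_
          rw [Real.norm_eq_abs, abs_of_nonneg (sq_nonneg _)]
          exact pow_le_pow_left₀ (Real.arccos_nonneg _) (Real.arccos_le_pi _) 2
      rw [hFval, tv, smul_eq_mul, mul_one]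
      rfl
    calc |pairSM η μ| ≤ ‖∫ x, η x ∂μ.toJordanDecomposition.posPart‖ +
          ‖∫ x, η x ∂μ.toJordanDecomposition.negPart‖ := by
          rw [pairSM]; exact abs_sub _ _
      _ ≤ (∫ x, g x ∂μ.toJordanDecomposition.posPart) +
          (∫ x, g x ∂μ.toJordanDecomposition.negPart) := add_le_add h1 h2
      _ = ∫ x, g x ∂ν := hsplit
      _ = tv μ - ρ * ∑ i, ∫ x in T i, (ang x (wstar i)) ^ 2 ∂ν := hgval
end
end
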